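/- Let X be a real Banach space whose modulus of smoothness satisfies ρ(u) ≤ γ u^q for all u > 0, where 1 < q ≤ 2 and γ > 0 is a constant, let D be a dictionary in X, let {t_k}_{k=1}^∞ be a weakness sequence with t_k ∈ (0, 1] for all k, and let f ∈ A_1(D). Suppose (f_m)_{m≥0} is generated by the Weak Rescaled Pure Greedy Algorithm WRPGA({t_k}, D) for f: f_0 = 0, and for each m ≥ 1, if f_{m−1} = f then f_m := f; otherwise, with F_{f−f_{m−1}} a norming functional of f − f_{m−1}, choose φ_m ∈ D with |F_{f−f_{m−1}}(φ_m)| ≥ t_m · sup_{φ∈D} |F_{f−f_{m−1}}(φ)|, set λ_m := sign(F_{f−f_{m−1}}(φ_m)) · ‖f − f_{m−1}‖ · (2γq)^{1/(1−q)} · |F_{f−f_{m−1}}(φ_m)|^{1/(q−1)}, ĥ_m := f_{m−1} + λ_m φ_m, choose s_m ∈ ℝ with ‖f − s_m ĥ_m‖ = min_{s∈ℝ} ‖f − s ĥ_m‖, and set f_m := s_m ĥ_m. Then there is a constant c = c(γ, q) such that for every m ≥ 1, ‖f − f_m‖ ≤ c · |f|_{A_1(D)} · ( ∑_{k=1}^m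 t_k^{q/(q−1)} )^{1/q − 1}. -/

import Mathlib

open scoped BigOperators

universe u

/-- A dictionary in a normed space: a set of norm-one elements with dense linear span. -/
def IsDictionary (X : Type u) [NormedAddCommGroup X] [NormedSpace ℝ X] (D : Set X) : Prop :=
  (∀ φ ∈ D, ‖φ‖ = 1) ∧ Dense (Submodule.span ℝ D : Set X)

/-- Finite linear combinations of dictionary elements with coefficients of total
absolute sum at most `M`. -/
def A1Pre (X : Type u) [NormedAddCommGroup X] [NormedSpace ℝ X] (D : Set X) (M : ℝ) : Set X :=
  {g | ∃ (n : ℕ) (c : Fin n → ℝ) (φ : Fin n → X),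
    (∀ i, φ i ∈ D) ∧ (∑ i, |c i|) ≤ M ∧ g = ∑ i, c i • φ i}

/-- The class `A₁(D, M)`: the closure of `A1Pre`. -/
def A1 (X : Type u) [NormedAddCommGroup X] [NormedSpace ℝ X] (D : Set X) (M : ℝ) : Set X :=
  closure (A1Pre X D M)

/-- The class `A₁(D)`: the union of the classes `A₁(D, M)` over all `M > 0`. -/
def A1Class (X : Type u) [NormedAddCommGroup X] [NormedSpace ℝ X] (D : Set X) : Set X :=
  ⋃ M ∈ Set.Ioi (0 : ℝ), A1 X D M

/-- The "semi-norm" `|f|_{A₁(D)} = inf {M : f ∈ A₁(D, M)}`. -/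
noncomputable def A1Norm (X : Type u) [NormedAddCommGroup X] [NormedSpace ℝ X]
    (D : Set X) (f : X) : ℝ :=
  sInf {M : ℝ | 0 < M ∧ f ∈ A1 X D M}

/-- The modulus of smoothness of a real normed space `X`:
`ρ(u) = sup{(‖f + u g‖ + ‖f − u g‖)/2 − 1 : ‖f‖ = ‖g‖ = 1}`. -/
noncomputable def modulusOfSmoothness (X : Type u) [NormedAddCommGroup X] [NormedSpace ℝ X]
    (u : ℝ) : ℝ :=
  sSup {x : ℝ | ∃ f g : X, ‖f‖ = 1 ∧ ‖g‖ = 1 ∧ x = (‖f + u • g‖ + ‖f - u • g‖) / 2 - 1}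

/-!
Write `p = q/(q-1)`. For a norming functional `F` of `x ≠ 0`, the bound on the modulus of
smoothness gives `‖x - v‖ ≤ ‖x‖ - F v + 2γ‖x‖(‖v‖/‖x‖)^q`. Two consequences drive the proof.
First, if `f - s ĥ` is a best approximation of `f` from the line `ℝ ĥ`, every norming functional
of it vanishes on `ĥ`; hence `F f_m = 0`, and for `f ∈ A₁(D, M)` this yields
`‖f - f_m‖ = F f ≤ M sup_D |F|`, so the weak greedy choice has `|F φ| ≥ t ‖f - f_m‖ / M`.
Second, the step `λ` minimises the right-hand side over `v ∈ ℝ φ`, which makes the residual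
shrink by the factor `1 - C |F φ|^p`, `C = (2γq)^{1/(1-q)} (1 - 1/q)`. With `a_m = ‖f - f_m‖ / M`
the recursion `a_{m+1} ≤ a_m (1 - C t_{m+1}^p a_m^p)` and Bernoulli's inequality give
`p C (∑ t_k^p) a_m^p ≤ 1`, i.e. the rate with `c = (pC)^{-1/p}` (note `1/q - 1 = -1/p`).
-/

open Finset Filter Topology

lemma Real.sign_mul_self_eq_abs (r : ℝ) : Real.sign r * r = |r| := by
  rcases lt_trichotomy r 0 with h | rfl | h
  · rw [Real.sign_of_neg h, abs_of_neg h]; ring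
  · simp
  · rw [Real.sign_of_pos h, abs_of_pos h, one_mul]

lemma Real.abs_sign_of_ne_zero {r : ℝ} (hr : r ≠ 0) : |Real.sign r| = 1 := by
  rcases Real.sign_apply_eq_of_ne_zero r hr with h | h <;> simp [h]

lemma Real.mul_rpow_one_div_one_sub_rpow_eq_self {c q : ℝ} (hc : 0 < c) (hq : q ≠ 1) :
    c * (c ^ ((1 : ℝ) / (1 - q))) ^ q = c ^ ((1 : ℝ) / (1 - q)) := by
  rw [← Real.rpow_mul hc.le, mul_comm, ← Real.rpow_add_one hc.ne']
  congr 1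
  field_simp [sub_ne_zero.2 hq.symm]
  ring

lemma Real.one_add_mul_mul_one_sub_rpow_le_one {p x : ℝ} (hp : 0 ≤ p) (hx : x < 1) :
    (1 + p * x) * (1 - x) ^ p ≤ 1 := by
  have h₁ : 1 + p * x ≤ Real.exp (p * x) := by linarith [Real.add_one_le_exp (p * x)]
  have h₂ : (1 - x) ^ p ≤ Real.exp (-x) ^ p :=
    Real.rpow_le_rpow (by linarith) (by linarith [Real.add_one_le_exp (-x)]) hp
  calc (1 + p * x) * (1 - x) ^ p ≤ Real.exp (p * x) * Real.exp (-x) ^ p := by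
        gcongr
    _ = 1 := by rw [← Real.exp_mul, ← Real.exp_add]; ring_nf; exact Real.exp_zero

section Recursion

variable {p : ℝ} {a τ : ℕ → ℝ}

lemma mul_sum_mul_rpow_le_one_of_le_mul_one_sub (hp : 0 < p) (ha : ∀ n, 0 ≤ a n)
    (hτ : ∀ n, 0 ≤ τ n) (hstep : ∀ n, a (n + 1) ≤ a n * (1 - τ (n + 1) * a n ^ p)) (n : ℕ) :
    p * (∑ k ∈ Icc 1 n, τ k) * a n ^ p ≤ 1 := by
  induction n with
  | zero => simp
  | succ n ih =>
    rcases (ha (n + 1)).eq_or_lt with hzero | hpos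
    · rw [← hzero, Real.zero_rpow hp.ne', mul_zero]
      exact zero_le_one
    set x := τ (n + 1) * a n ^ p
    have hx : x < 1 := by
      by_contra! hx
      nlinarith [hstep n, ha n]
    have hpow : a (n + 1) ^ p ≤ a n ^ p * (1 - x) ^ p := by
      rw [← Real.mul_rpow (ha n) (by linarith)]
      exact Real.rpow_le_rpow (ha _) (hstep n) hp.le
    have hS : 0 ≤ ∑ k ∈ Icc 1 n, τ k := sum_nonneg fun k _ => hτ k
    calc p * (∑ k ∈ Icc 1 (n + 1), τ k) * a (n + 1) ^ p
        = (p * (∑ k ∈ Icc 1 n, τ k) + p * τ (n + 1)) * a (n + 1) ^ p := by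
          rw [sum_Icc_succ_top (by omega)]
          ring
      _ ≤ (p * (∑ k ∈ Icc 1 n, τ k) + p * τ (n + 1)) * (a n ^ p * (1 - x) ^ p) := by
          gcongr
          exact add_nonneg (mul_nonneg hp.le hS) (mul_nonneg hp.le (hτ _))
      _ = (p * (∑ k ∈ Icc 1 n, τ k) * a n ^ p + p * x) * (1 - x) ^ p := by ring
      _ ≤ (1 + p * x) * (1 - x) ^ p := by
          gcongr
      _ ≤ 1 := Real.one_add_mul_mul_one_sub_rpow_le_one hp.le hx

lemma le_mul_sum_rpow_neg_inv_of_le_mul_one_sub (hp : 0 < p) (ha : ∀ n, 0 ≤ a n)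
    (hτ : ∀ n, 0 ≤ τ n) (hstep : ∀ n, a (n + 1) ≤ a n * (1 - τ (n + 1) * a n ^ p)) {n : ℕ}
    (hsum : 0 < ∑ k ∈ Icc 1 n, τ k) : a n ≤ (p * ∑ k ∈ Icc 1 n, τ k) ^ (-p⁻¹) := by
  have hpS : 0 < p * ∑ k ∈ Icc 1 n, τ k := mul_pos hp hsum
  rw [Real.rpow_neg hpS.le, ← Real.inv_rpow hpS.le,
    Real.le_rpow_inv_iff_of_pos (ha n) (inv_nonneg.2 hpS.le) hp, ← one_div, le_div_iff₀' hpS]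
  exact mul_sum_mul_rpow_le_one_of_le_mul_one_sub hp ha hτ hstep n

end Recursion

section

variable {X : Type u} [NormedAddCommGroup X] [NormedSpace ℝ X] {D : Set X}

lemma norm_add_smul_add_norm_sub_smul_le {x y : X} (hx : ‖x‖ = 1) (hy : ‖y‖ = 1) {u : ℝ}
    (hu : 0 ≤ u) : ‖x + u • y‖ + ‖x - u • y‖ ≤ 2 * (1 + modulusOfSmoothness X u) := by
  have hbdd : BddAbove {z : ℝ | ∃ f g : X, ‖f‖ = 1 ∧ ‖g‖ = 1 ∧
      z = (‖f + u • g‖ + ‖f - u • g‖) / 2 - 1} := by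
    refine ⟨u, ?_⟩
    rintro z ⟨f, g, hf, hg, rfl⟩
    have h₁ := norm_add_le f (u • g)
    have h₂ := norm_sub_le f (u • g)
    rw [norm_smul, hf, hg, Real.norm_of_nonneg hu, mul_one] at h₁ h₂
    linarith
  have := le_csSup hbdd ⟨x, y, hx, hy, rfl⟩
  rw [modulusOfSmoothness]
  linarith

lemma norm_add_add_norm_sub_le {x y : X} (hx : x ≠ 0) (hy : y ≠ 0) :
    ‖x + y‖ + ‖x - y‖ ≤ 2 * ‖x‖ * (1 + modulusOfSmoothness X (‖y‖ / ‖x‖)) := by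
  have hx' : (0 : ℝ) < ‖x‖ := norm_pos_iff.2 hx
  have hy' : (0 : ℝ) < ‖y‖ := norm_pos_iff.2 hy
  have hscale : ∀ ε : ℝ, x + ε • y = ‖x‖ • (‖x‖⁻¹ • x + ε • (‖y‖ / ‖x‖) • ‖y‖⁻¹ • y) := by
    intro ε
    rw [smul_add, smul_inv_smul₀ hx'.ne', smul_smul, smul_smul, smul_smul]
    congr 2
    field_simp
  have hsum := norm_add_smul_add_norm_sub_smul_le (norm_smul_inv_norm (𝕜 := ℝ) hx)
    (norm_smul_inv_norm (𝕜 := ℝ) hy)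
    (div_pos hy' hx').le
  simp only [RCLike.ofReal_real_eq_id, id_eq] at hsum
  have hplus := hscale 1
  have hminus := hscale (-1)
  rw [one_smul, one_smul] at hplus
  rw [neg_one_smul, neg_one_smul, ← sub_eq_add_neg, ← sub_eq_add_neg] at hminus
  rw [hplus, hminus, norm_smul, norm_smul, norm_norm]
  linarith [mul_le_mul_of_nonneg_left hsum hx'.le]

def IsNormingFunctional (F : X →L[ℝ] ℝ) (x : X) : Prop :=
  ‖F‖ = 1 ∧ F x = ‖x‖

namespace IsNormingFunctional

variable {F : X →L[ℝ] ℝ} {x : X} {γ q : ℝ}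

lemma norm_add_apply_le (hF : IsNormingFunctional F x) (v : X) : ‖x‖ + F v ≤ ‖x + v‖ :=
  calc ‖x‖ + F v = F (x + v) := by rw [map_add, hF.2]
    _ ≤ ‖F‖ * ‖x + v‖ := (Real.le_norm_self _).trans (F.le_opNorm _)
    _ = ‖x + v‖ := by rw [hF.1, one_mul]

lemma norm_sub_le (hρ : ∀ u : ℝ, 0 < u → modulusOfSmoothness X u ≤ γ * u ^ q)
    (hF : IsNormingFunctional F x) (hx : x ≠ 0) {v : X} (hv : v ≠ 0) :
    ‖x - v‖ ≤ ‖x‖ - F v + 2 * γ * ‖x‖ * (‖v‖ / ‖x‖) ^ q := by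
  have hx' : (0 : ℝ) < ‖x‖ := norm_pos_iff.2 hx
  have hρv := hρ (‖v‖ / ‖x‖) (div_pos (norm_pos_iff.2 hv) hx')
  have := norm_add_add_norm_sub_le hx hv
  linarith [hF.norm_add_apply_le v, mul_le_mul_of_nonneg_left hρv (by positivity : 0 ≤ 2 * ‖x‖)]

/-- The first-order term `-F v` dominates the `O(‖v‖^q)` smoothness term as `v → 0`. -/
lemma apply_nonpos_of_forall_norm_le_norm_sub_smul
    (hρ : ∀ u : ℝ, 0 < u → modulusOfSmoothness X u ≤ γ * u ^ q) (hq : 1 < q)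
    (hF : IsNormingFunctional F x) (hx : x ≠ 0) {h : X} (hmin : ∀ u : ℝ, ‖x‖ ≤ ‖x - u • h‖) :
    F h ≤ 0 := by
  rcases eq_or_ne h 0 with rfl | hh
  · simp
  set K := 2 * γ * ‖x‖ * (‖h‖ / ‖x‖) ^ q
  have hbound : ∀ u : ℝ, 0 < u → F h ≤ K * u ^ (q - 1) := by
    intro u hu
    have hdesc := hF.norm_sub_le hρ hx (smul_ne_zero hu.ne' hh)
    rw [map_smul, smul_eq_mul, norm_smul, Real.norm_of_nonneg hu.le, mul_div_assoc,
      Real.mul_rpow hu.le (by positivity)] at hdesc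
    rw [Real.rpow_sub_one hu.ne', mul_div_assoc', le_div_iff₀ hu]
    linarith [hmin u]
  have hlim : Tendsto (fun u : ℝ => K * u ^ (q - 1)) (𝓝[>] 0) (𝓝 0) := by
    have hcont := (Real.continuousAt_rpow_const 0 (q - 1) (Or.inr (by linarith))).tendsto
    rw [Real.zero_rpow (by linarith)] at hcont
    simpa using (hcont.const_mul K).mono_left (nhdsWithin_le_nhds (s := Set.Ioi 0))
  exact ge_of_tendsto hlim (eventually_nhdsWithin_of_forall fun u hu => hbound u hu)

lemma apply_eq_zero_of_forall_norm_le_norm_add_smul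
    (hρ : ∀ u : ℝ, 0 < u → modulusOfSmoothness X u ≤ γ * u ^ q) (hq : 1 < q)
    (hF : IsNormingFunctional F x) (hx : x ≠ 0) {h : X} (hmin : ∀ u : ℝ, ‖x‖ ≤ ‖x + u • h‖) :
    F h = 0 := by
  have hle := hF.apply_nonpos_of_forall_norm_le_norm_sub_smul hρ hq hx fun u => by
    simpa [sub_eq_add_neg, ← neg_smul] using hmin (-u)
  have hge := hF.apply_nonpos_of_forall_norm_le_norm_sub_smul hρ hq hx (h := -h) fun u => by
    simpa [sub_eq_add_neg] using hmin u
  rw [map_neg] at hge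
  linarith

/-- `A = (2γq)^{1/(1-q)}` satisfies `2γA^q = A/q`: with this step size the smoothness loss is
the fraction `1/q` of the first-order gain `A |F φ|^{q/(q-1)}`. -/
lemma norm_sub_greedy_step_le (hρ : ∀ u : ℝ, 0 < u → modulusOfSmoothness X u ≤ γ * u ^ q)
    (hq : 1 < q) (hγ : 0 < γ) (hF : IsNormingFunctional F x) (hx : x ≠ 0) {φ : X} (hφ : ‖φ‖ = 1)
    (hFφ : F φ ≠ 0) :
    ‖x - (Real.sign (F φ) * ‖x‖ * (2 * γ * q) ^ ((1 : ℝ) / (1 - q)) *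
        |F φ| ^ ((1 : ℝ) / (q - 1))) • φ‖ ≤
      ‖x‖ * (1 - (2 * γ * q) ^ ((1 : ℝ) / (1 - q)) * (1 - 1 / q) * |F φ| ^ (q / (q - 1))) := by
  have hq' : 0 < q - 1 := by linarith
  set A := (2 * γ * q) ^ ((1 : ℝ) / (1 - q))
  set b := |F φ|
  have hb : 0 < b := abs_pos.2 hFφ
  have hApos : 0 < A := Real.rpow_pos_of_pos (by positivity) _
  have hAq : 2 * γ * A ^ q = A / q := by
    rw [eq_div_iff (by positivity)]
    linear_combination Real.mul_rpow_one_div_one_sub_rpow_eq_self (by positivity : 0 < 2 * γ * q)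
      hq.ne'
  have hbpow : b ^ ((1 : ℝ) / (q - 1)) * b = b ^ (q / (q - 1)) := by
    rw [← Real.rpow_add_one hb.ne']
    congr 1
    field_simp
    ring
  have hApow : (A * b ^ ((1 : ℝ) / (q - 1))) ^ q = A ^ q * b ^ (q / (q - 1)) := by
    rw [Real.mul_rpow hApos.le (by positivity), ← Real.rpow_mul hb.le]
    congr 2
    field_simp
  set v := (Real.sign (F φ) * ‖x‖ * A * b ^ ((1 : ℝ) / (q - 1))) • φ
  have hnorm : ‖v‖ / ‖x‖ = A * b ^ ((1 : ℝ) / (q - 1)) := by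
    rw [norm_smul, hφ, Real.norm_eq_abs, abs_mul, abs_mul, abs_mul, Real.abs_sign_of_ne_zero hFφ,
      abs_norm, abs_of_pos hApos, abs_of_pos (Real.rpow_pos_of_pos hb _)]
    field_simp
  have hFv : F v = ‖x‖ * A * b ^ (q / (q - 1)) := by
    have hsign : Real.sign (F φ) * F φ = b := Real.sign_mul_self_eq_abs _
    rw [map_smul, smul_eq_mul, ← hbpow]
    linear_combination (‖x‖ * A * b ^ ((1 : ℝ) / (q - 1))) * hsign
  have hv : v ≠ 0 := by
    intro hv0
    rw [hv0, norm_zero, zero_div] at hnorm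
    linarith [mul_pos hApos (Real.rpow_pos_of_pos hb ((1 : ℝ) / (q - 1)))]
  calc ‖x - v‖ ≤ ‖x‖ - F v + 2 * γ * ‖x‖ * (‖v‖ / ‖x‖) ^ q := hF.norm_sub_le hρ hx hv
    _ = ‖x‖ * (1 - A * (1 - 1 / q) * b ^ (q / (q - 1))) := by
      rw [hFv, hnorm, hApow]
      linear_combination (‖x‖ * b ^ (q / (q - 1))) * hAq

end IsNormingFunctional

lemma apply_le_mul_sSup_of_mem_A1 (hD : ∀ φ ∈ D, ‖φ‖ ≤ 1) (F : X →L[ℝ] ℝ) {M : ℝ} {g : X}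
    (hg : g ∈ A1 X D M) : F g ≤ M * sSup {x : ℝ | ∃ ψ ∈ D, x = |F ψ|} := by
  set S := {x : ℝ | ∃ ψ ∈ D, x = |F ψ|}
  have hbdd : BddAbove S := by
    refine ⟨‖F‖, ?_⟩
    rintro x ⟨ψ, hψ, rfl⟩
    exact (F.le_opNorm ψ).trans (mul_le_of_le_one_right (norm_nonneg F) (hD ψ hψ))
  have hS : 0 ≤ sSup S := Real.sSup_nonneg (by rintro x ⟨ψ, -, rfl⟩; exact abs_nonneg _)
  refine closure_minimal ?_ (isClosed_le F.continuous continuous_const) hg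
  rintro g ⟨n, c, φ, hφ, hc, rfl⟩
  calc F (∑ i, c i • φ i) = ∑ i, c i * F (φ i) := by simp only [map_sum, map_smul, smul_eq_mul]
    _ ≤ ∑ i, |c i| * sSup S := sum_le_sum fun i _ => (le_abs_self _).trans <| by
        rw [abs_mul]
        exact mul_le_mul_of_nonneg_left (le_csSup hbdd ⟨φ i, hφ i, rfl⟩) (abs_nonneg _)
    _ = (∑ i, |c i|) * sSup S := (sum_mul ..).symm
    _ ≤ M * sSup S := mul_le_mul_of_nonneg_right hc hS

lemma le_A1Norm_mul {f : X} (hf : f ∈ A1Class X D) {x k : ℝ} (hk : 0 < k)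
    (h : ∀ M, 0 < M → f ∈ A1 X D M → x ≤ M * k) : x ≤ A1Norm X D f * k := by
  obtain ⟨M₀, hM₀, hfM₀⟩ := Set.mem_iUnion₂.1 hf
  rw [← div_le_iff₀ hk]
  exact le_csInf ⟨M₀, hM₀, hfM₀⟩ fun M ⟨hM, hfM⟩ => (div_le_iff₀ hk).2 (h M hM hfM)

def IsWRPGAStep (γ q : ℝ) (D : Set X) (τ : ℝ) (f g g' : X) : Prop :=
  ∃ (F : X →L[ℝ] ℝ) (φ : X) (lam s : ℝ),
    ‖F‖ = 1 ∧ F (f - g) = ‖f - g‖ ∧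
    φ ∈ D ∧ |F φ| ≥ τ * sSup {x : ℝ | ∃ ψ ∈ D, x = |F ψ|} ∧
    lam = Real.sign (F φ) * ‖f - g‖ * (2 * γ * q) ^ ((1 : ℝ) / (1 - q)) *
      |F φ| ^ ((1 : ℝ) / (q - 1)) ∧
    (∀ s' : ℝ, ‖f - s • (g + lam • φ)‖ ≤ ‖f - s' • (g + lam • φ)‖) ∧
    g' = s • (g + lam • φ)

namespace IsWRPGAStep

variable {γ q τ : ℝ} {f g g' : X}

lemma apply_eq_zero (hρ : ∀ u : ℝ, 0 < u → modulusOfSmoothness X u ≤ γ * u ^ q) (hq : 1 < q)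
    (hstep : IsWRPGAStep γ q D τ f g g') {G : X →L[ℝ] ℝ} (hG : IsNormingFunctional G (f - g'))
    (hne : f - g' ≠ 0) : G g' = 0 := by
  obtain ⟨-, φ, lam, s, -, -, -, -, -, hmin, rfl⟩ := hstep
  set h := g + lam • φ
  have hGh : G h = 0 :=
    hG.apply_eq_zero_of_forall_norm_le_norm_add_smul hρ hq hne fun u => by
      rw [show f - s • h + u • h = f - (s - u) • h by rw [sub_smul]; abel]
      exact hmin (s - u)
  rw [map_smul, hGh, smul_zero]

lemma norm_sub_div_le (hρ : ∀ u : ℝ, 0 < u → modulusOfSmoothness X u ≤ γ * u ^ q) (hq : 1 < q)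
    (hγ : 0 < γ) (hD : ∀ φ ∈ D, ‖φ‖ = 1) {M : ℝ} (hM : 0 < M) (hfM : f ∈ A1 X D M) (hτ : 0 < τ)
    (hstep : IsWRPGAStep γ q D τ f g g') (hg : ∀ G, IsNormingFunctional G (f - g) → G g = 0)
    (hne : f - g ≠ 0) :
    ‖f - g'‖ / M ≤ ‖f - g‖ / M * (1 - (2 * γ * q) ^ ((1 : ℝ) / (1 - q)) * (1 - 1 / q) *
      τ ^ (q / (q - 1)) * (‖f - g‖ / M) ^ (q / (q - 1))) := by
  obtain ⟨F, φ, lam, s, hF1, hFr, hφD, hFφ, hlam, hmin, rfl⟩ := hstep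
  have hF : IsNormingFunctional F (f - g) := ⟨hF1, hFr⟩
  have hFf : F f = ‖f - g‖ := by rwa [map_sub, hg F hF, sub_zero] at hFr
  have hb : τ * (‖f - g‖ / M) ≤ |F φ| := by
    refine le_trans ?_ hFφ
    gcongr
    rw [div_le_iff₀' hM, ← hFf]
    exact apply_le_mul_sSup_of_mem_A1 (fun φ hφ => (hD φ hφ).le) F hfM
  have hbpos : 0 < τ * (‖f - g‖ / M) := mul_pos hτ (div_pos (norm_pos_iff.2 hne) hM)
  have hFφ0 : F φ ≠ 0 := abs_pos.1 (hbpos.trans_le hb)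
  have hC : 0 ≤ (2 * γ * q) ^ ((1 : ℝ) / (1 - q)) * (1 - 1 / q) :=
    mul_nonneg (Real.rpow_nonneg (by positivity) _)
      (sub_nonneg.2 ((div_le_one (by linarith)).2 hq.le))
  have hp : 0 ≤ q / (q - 1) := div_nonneg (by linarith) (by linarith)
  calc ‖f - s • (g + lam • φ)‖ / M ≤ ‖(f - g) - lam • φ‖ / M := by
        gcongr
        simpa [sub_sub] using hmin 1
    _ ≤ ‖f - g‖ * (1 - (2 * γ * q) ^ ((1 : ℝ) / (1 - q)) * (1 - 1 / q) *
          |F φ| ^ (q / (q - 1))) / M := by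
        gcongr
        rw [hlam]
        exact hF.norm_sub_greedy_step_le hρ hq hγ hne (hD φ hφD) hFφ0
    _ ≤ ‖f - g‖ * (1 - (2 * γ * q) ^ ((1 : ℝ) / (1 - q)) * (1 - 1 / q) *
          (τ * (‖f - g‖ / M)) ^ (q / (q - 1))) / M := by
        gcongr
    _ = ‖f - g‖ / M * (1 - (2 * γ * q) ^ ((1 : ℝ) / (1 - q)) * (1 - 1 / q) *
          τ ^ (q / (q - 1)) * (‖f - g‖ / M) ^ (q / (q - 1))) := by
        rw [Real.mul_rpow hτ.le (by positivity)]
        ring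

end IsWRPGAStep

def IsWRPGA (γ q : ℝ) (D : Set X) (t : ℕ → ℝ) (f : X) (fseq : ℕ → X) : Prop :=
  fseq 0 = 0 ∧ ∀ m, (fseq m = f → fseq (m + 1) = f) ∧
    (fseq m ≠ f → IsWRPGAStep γ q D (t (m + 1)) f (fseq m) (fseq (m + 1)))

namespace IsWRPGA

variable {γ q : ℝ} {t : ℕ → ℝ} {f : X} {fseq : ℕ → X}

lemma apply_eq_zero (hρ : ∀ u : ℝ, 0 < u → modulusOfSmoothness X u ≤ γ * u ^ q) (hq : 1 < q)
    (halg : IsWRPGA γ q D t f fseq) (n : ℕ) {G : X →L[ℝ] ℝ}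
    (hG : IsNormingFunctional G (f - fseq n)) (hne : f - fseq n ≠ 0) : G (fseq n) = 0 := by
  rcases n with _ | n
  · simp [halg.1]
  · by_cases hn : fseq n = f
    · simp [(halg.2 n).1 hn] at hne
    · exact ((halg.2 n).2 hn).apply_eq_zero hρ hq hG hne

lemma norm_sub_succ_div_le (hρ : ∀ u : ℝ, 0 < u → modulusOfSmoothness X u ≤ γ * u ^ q)
    (hq : 1 < q) (hγ : 0 < γ) (hD : ∀ φ ∈ D, ‖φ‖ = 1) (ht : ∀ k, 0 < t k) {M : ℝ} (hM : 0 < M)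
    (hfM : f ∈ A1 X D M) (halg : IsWRPGA γ q D t f fseq) (n : ℕ) :
    ‖f - fseq (n + 1)‖ / M ≤ ‖f - fseq n‖ / M * (1 - (2 * γ * q) ^ ((1 : ℝ) / (1 - q)) *
      (1 - 1 / q) * t (n + 1) ^ (q / (q - 1)) * (‖f - fseq n‖ / M) ^ (q / (q - 1))) := by
  by_cases hn : fseq n = f
  · simp [(halg.2 n).1 hn, hn]
  have hne : f - fseq n ≠ 0 := sub_ne_zero.2 (Ne.symm hn)
  exact ((halg.2 n).2 hn).norm_sub_div_le hρ hq hγ hD hM hfM (ht _)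
    (fun G hG => halg.apply_eq_zero hρ hq n hG hne) hne

lemma norm_sub_le (hρ : ∀ u : ℝ, 0 < u → modulusOfSmoothness X u ≤ γ * u ^ q)
    (hq : 1 < q) (hγ : 0 < γ) (hD : ∀ φ ∈ D, ‖φ‖ = 1) (ht : ∀ k, 0 < t k) {M : ℝ} (hM : 0 < M)
    (hfM : f ∈ A1 X D M) (halg : IsWRPGA γ q D t f fseq) {m : ℕ} (hm : 1 ≤ m) :
    ‖f - fseq m‖ ≤ M * ((q / (q - 1) * ((2 * γ * q) ^ ((1 : ℝ) / (1 - q)) * (1 - 1 / q))) ^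
      ((1 : ℝ) / q - 1) * (∑ k ∈ Icc 1 m, t k ^ (q / (q - 1))) ^ ((1 : ℝ) / q - 1)) := by
  set p := q / (q - 1)
  set C := (2 * γ * q) ^ ((1 : ℝ) / (1 - q)) * (1 - 1 / q)
  have hp : 0 < p := div_pos (by linarith) (by linarith)
  have hC : 0 < C := mul_pos (Real.rpow_pos_of_pos (by positivity) _)
    (sub_pos.2 ((div_lt_one (by linarith)).2 hq))
  have hexp : (1 : ℝ) / q - 1 = -p⁻¹ := by
    rw [inv_div]
    field_simp
    ring
  have hsum : 0 < ∑ k ∈ Icc 1 m, t k ^ p :=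
    sum_pos (fun k _ => Real.rpow_pos_of_pos (ht k) p) ⟨1, mem_Icc.2 ⟨le_rfl, hm⟩⟩
  have hrate := le_mul_sum_rpow_neg_inv_of_le_mul_one_sub (a := fun n => ‖f - fseq n‖ / M) hp
    (fun n => by positivity) (fun k => (mul_pos hC (Real.rpow_pos_of_pos (ht k) p)).le)
    (halg.norm_sub_succ_div_le hρ hq hγ hD ht hM hfM) (n := m) (by rw [← mul_sum]; positivity)
  rwa [← mul_sum, ← mul_assoc, Real.mul_rpow (by positivity) hsum.le, ← hexp,
    div_le_iff₀' hM] at hrate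

end IsWRPGA

end

theorem wrpga_banach_rate_general (γ q : ℝ) (hq1 : 1 < q) (hγ : 0 < γ) :
    ∃ c : ℝ, 0 < c ∧
      ∀ (X : Type u) [NormedAddCommGroup X] [NormedSpace ℝ X] [CompleteSpace X]
        (D : Set X), IsDictionary X D →
        (∀ u : ℝ, 0 < u → modulusOfSmoothness X u ≤ γ * u ^ q) →
        ∀ t : ℕ → ℝ, (∀ k : ℕ, t k ∈ Set.Ioc (0 : ℝ) 1) →
        ∀ f ∈ A1Class X D, ∀ fseq : ℕ → X, fseq 0 = 0 →
        (∀ m : ℕ,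
          (fseq m = f → fseq (m + 1) = f) ∧
          (fseq m ≠ f → ∃ (F : X →L[ℝ] ℝ) (φ : X) (lam s : ℝ),
            ‖F‖ = 1 ∧ F (f - fseq m) = ‖f - fseq m‖ ∧
            φ ∈ D ∧ |F φ| ≥ t (m + 1) * sSup {x : ℝ | ∃ ψ ∈ D, x = |F ψ|} ∧
            lam = Real.sign (F φ) * ‖f - fseq m‖ * (2 * γ * q) ^ ((1 : ℝ) / (1 - q)) *
              |F φ| ^ ((1 : ℝ) / (q - 1)) ∧
            (∀ s' : ℝ, ‖f - s • (fseq m + lam • φ)‖ ≤ ‖f - s' • (fseq m + lam • φ)‖) ∧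
            fseq (m + 1) = s • (fseq m + lam • φ))) →
        ∀ m : ℕ, 1 ≤ m →
          ‖f - fseq m‖ ≤ c * A1Norm X D f *
            (∑ k ∈ Finset.Icc 1 m, t k ^ (q / (q - 1))) ^ ((1 : ℝ) / q - 1) := by
  have hp : 0 < q / (q - 1) := div_pos (by linarith) (by linarith)
  have hC : 0 < (2 * γ * q) ^ ((1 : ℝ) / (1 - q)) * (1 - 1 / q) :=
    mul_pos (Real.rpow_pos_of_pos (by positivity) _) (sub_pos.2 ((div_lt_one (by linarith)).2 hq1))
  refine ⟨(q / (q - 1) * ((2 * γ * q) ^ ((1 : ℝ) / (1 - q)) * (1 - 1 / q))) ^ ((1 : ℝ) / q - 1),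
    by positivity, fun X _ _ _ D hD hρ t ht f hf fseq h0 halg m hm => ?_⟩
  have hsum : 0 < ∑ k ∈ Icc 1 m, t k ^ (q / (q - 1)) :=
    sum_pos (fun k _ => Real.rpow_pos_of_pos (ht k).1 _) ⟨1, mem_Icc.2 ⟨le_rfl, hm⟩⟩
  exact (le_A1Norm_mul hf (by positivity) fun M hM hfM =>
    IsWRPGA.norm_sub_le hρ hq1 hγ hD.1 (fun k => (ht k).1) hM hfM ⟨h0, halg⟩ hm).trans_eq (by ring)

/-- Convergence rate of the Weak Rescaled Pure Greedy Algorithm WRPGA({t_k}, D) in a Banach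
space with `ρ(u) ≤ γ u^q`, `1 < q ≤ 2`: there is a constant `c = c(γ, q)` such that for
`f ∈ A₁(D)` the output `(f_m)` satisfies
`‖f − f_m‖ ≤ c · |f|_{A₁(D)} · (∑_{k=1}^m t_k^{q/(q−1)})^{1/q − 1}` for all `m ≥ 1`. -/
theorem wrpga_banach_rate (γ q : ℝ) (hq1 : 1 < q) (hq2 : q ≤ 2) (hγ : 0 < γ) :
    ∃ c : ℝ, 0 < c ∧
      ∀ (X : Type u) [NormedAddCommGroup X] [NormedSpace ℝ X] [CompleteSpace X]
        (D : Set X), IsDictionary X D →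
        (∀ u : ℝ, 0 < u → modulusOfSmoothness X u ≤ γ * u ^ q) →
        ∀ t : ℕ → ℝ, (∀ k : ℕ, t k ∈ Set.Ioc (0 : ℝ) 1) →
        ∀ f ∈ A1Class X D, ∀ fseq : ℕ → X, fseq 0 = 0 →
        (∀ m : ℕ,
          (fseq m = f → fseq (m + 1) = f) ∧
          (fseq m ≠ f → ∃ (F : X →L[ℝ] ℝ) (φ : X) (lam s : ℝ),
            ‖F‖ = 1 ∧ F (f - fseq m) = ‖f - fseq m‖ ∧
            φ ∈ D ∧ |F φ| ≥ t (m + 1) * sSup {x : ℝ | ∃ ψ ∈ D, x = |F ψ|} ∧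
            lam = Real.sign (F φ) * ‖f - fseq m‖ * (2 * γ * q) ^ ((1 : ℝ) / (1 - q)) *
              |F φ| ^ ((1 : ℝ) / (q - 1)) ∧
            (∀ s' : ℝ, ‖f - s • (fseq m + lam • φ)‖ ≤ ‖f - s' • (fseq m + lam • φ)‖) ∧
            fseq (m + 1) = s • (fseq m + lam • φ))) →
        ∀ m : ℕ, 1 ≤ m →
          ‖f - fseq m‖ ≤ c * A1Norm X D f *
            (∑ k ∈ Finset.Icc 1 m, t k ^ (q / (q - 1))) ^ ((1 : ℝ) / q - 1) :=
  wrpga_banach_rate_general γ q hq1 hγ
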